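/- arXiv:2105.00541 — 3 statements merged into one kernel-verified Lean document; each statement's English description precedes it below -/
import Mathlib

section
/- Let V_1, …, V_k be subsets of {1,…,n} and M_V the associated variable-valued matrix over K. A nonempty set S ⊆ {1,…,n} is a circuit of the column matroid M(V) — i.e., the columns of M_V indexed by S are linearly dependent over K while the columns indexed by any proper subset of S are linearly independent — if and only if |{i : V_i ∩ S ≠ ∅}| = |S| − 1 and every nonempty proper subset U ⊊ S satisfies |{i : V_i ∩ U ≠ ∅}| ≥ |U|. -/
/-!
Independence of a set `U` of columns of `M_V` is Hall's condition for `U`. If `U` is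
independent, its columns vanish outside the rows `i` with `V_i ∩ U ≠ ∅`, so there are at
least `|U|` such rows. Conversely, a Hall matching `f : U → rows` picks a square minor of
`M_V` whose determinant is a nonzero polynomial: sending `x_{f(u),u} ↦ 1` and every other
variable to `0` turns the minor into the identity matrix. Circuits are therefore the
minimal violators `S` of Hall's condition, and comparing `S` with `S ∖ {x}` pins the
neighbourhood of `S` down to exactly `|S| - 1` rows.
-/

open MvPolynomial

/-- The polynomial ring `ℝ[x_{i,j}]` in `k·n` independent variables. -/
abbrev PR (k n : ℕ) : Type := MvPolynomial (Fin k × Fin n) ℝ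

/-- Its field of fractions `K`. -/
abbrev FF (k n : ℕ) : Type := FractionRing (PR k n)

/-- The variable-valued matrix `M_V` over `K` attached to a collection
`V = (V_1, …, V_k)` of subsets of `{1,…,n}`: the `(i,j)` entry is `x_{i,j}` if
`j ∈ V_i` and `0` otherwise. -/
noncomputable def MV (k n : ℕ) (V : Fin k → Finset (Fin n)) :
    Matrix (Fin k) (Fin n) (FF k n) :=
  Matrix.of fun i j =>
    if j ∈ V i then algebraMap (PR k n) (FF k n) (X (i, j)) else 0

/-- Linear independence over `F` of the columns of a matrix indexed by a set `S`. -/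
def ColsIndep {k n : ℕ} {F : Type*} [Field F] (M : Matrix (Fin k) (Fin n) F)
    (S : Finset (Fin n)) : Prop :=
  LinearIndependent F (fun j : {x : Fin n // x ∈ S} => fun i : Fin k => M i (j : Fin n))

open Matrix Finset

section Hall

variable {ι α : Type*} [Fintype ι] [DecidableEq α]

def rowsMeeting (V : ι → Finset α) (U : Finset α) : Finset ι :=
  univ.filter fun i => (V i ∩ U).Nonempty

theorem rowsMeeting_mono (V : ι → Finset α) : Monotone (rowsMeeting V) :=
  fun _ _ hU => monotone_filter_right _ fun _ _ h => h.mono (inter_subset_inter_left hU)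

theorem exists_injective_of_hall (V : ι → Finset α) (U : Finset α)
    (hall : ∀ U' ⊆ U, U'.card ≤ (rowsMeeting V U').card) :
    ∃ f : U → ι, Function.Injective f ∧ ∀ u, (u : α) ∈ V (f u) := by
  classical
  let rowsOf : U → Finset ι := fun u => univ.filter fun i => (u : α) ∈ V i
  have hall' : ∀ s : Finset U, s.card ≤ (s.biUnion rowsOf).card := by
    intro s
    have hbiUnion : s.biUnion rowsOf = rowsMeeting V (s.map (Function.Embedding.subtype _)) := by
      ext i
      simp only [rowsOf, rowsMeeting, mem_biUnion, mem_filter, mem_univ, true_and, mem_map,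
        Finset.Nonempty, mem_inter, Function.Embedding.coe_subtype]
      exact ⟨fun ⟨u, hu, hi⟩ => ⟨u, hi, u, hu, rfl⟩,
        fun ⟨_, hi, u, hu, hu'⟩ => ⟨u, hu, hu' ▸ hi⟩⟩
    rw [hbiUnion, ← card_map (Function.Embedding.subtype _)]
    refine hall _ fun x hx => ?_
    obtain ⟨u, -, rfl⟩ := mem_map.1 hx
    exact u.2
  obtain ⟨f, hf, hfV⟩ := (all_card_le_biUnion_card_iff_exists_injective rowsOf).1 hall'
  exact ⟨f, hf, fun u => (mem_filter.1 (hfV u)).2⟩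

theorem not_hall_and_forall_ssubset_hall_iff {g : Finset α → ℕ} (hg : Monotone g)
    {S : Finset α} (hS : S.Nonempty) :
    (¬ (∀ U ⊆ S, U.card ≤ g U) ∧ ∀ U ⊂ S, ∀ U' ⊆ U, U'.card ≤ g U') ↔
      g S = S.card - 1 ∧ ∀ U ⊂ S, U.Nonempty → U.card ≤ g U := by
  obtain ⟨x, hx⟩ := hS
  constructor
  · rintro ⟨hfail, hsub⟩
    have hproper : ∀ U ⊂ S, U.card ≤ g U := fun U hU => hsub U hU U subset_rfl
    have hlt : g S < S.card := by
      push Not at hfail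
      obtain ⟨U, hUS, hU⟩ := hfail
      rcases hUS.eq_or_ssubset with rfl | hUS
      · exact hU
      · exact absurd (hproper U hUS) hU.not_ge
    have hge : S.card - 1 ≤ g S :=
      calc S.card - 1 = (S.erase x).card := (card_erase_of_mem hx).symm
        _ ≤ g (S.erase x) := hproper _ (erase_ssubset hx)
        _ ≤ g S := hg (erase_subset x S)
    exact ⟨by omega, fun U hU _ => hproper U hU⟩
  · rintro ⟨hcard, hproper⟩
    refine ⟨fun hall => ?_, fun U hU U' hU' => ?_⟩
    · have := hall S subset_rfl
      have := card_pos.2 ⟨x, hx⟩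
      omega
    · rcases U'.eq_empty_or_nonempty with rfl | hne
      · simp
      · exact hproper U' (Finset.ssubset_of_subset_of_ssubset hU' hU) hne

end Hall

section ColsIndep

variable {k n : ℕ} {F : Type*} [Field F]

theorem ColsIndep.mono {M : Matrix (Fin k) (Fin n) F} {U U' : Finset (Fin n)}
    (h : ColsIndep M U) (hU' : U' ⊆ U) : ColsIndep M U' :=
  h.comp (fun u : U' => ⟨u, hU' u.2⟩) fun _ _ huv =>
    Subtype.ext (by simpa using congrArg Subtype.val huv)

theorem LinearIndependent.card_le_card_of_forall_notMem_eq_zero {ι κ : Type*} [Fintype ι]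
    {v : ι → κ → F} (hv : LinearIndependent F v) (R : Finset κ)
    (hR : ∀ x, ∀ i ∉ R, v x i = 0) : Fintype.card ι ≤ R.card := by
  have hrestrict : LinearIndependent F fun x (i : R) => v x i := by
    rw [Fintype.linearIndependent_iff] at hv ⊢
    intro g hg
    refine hv g (funext fun i => ?_)
    by_cases hi : i ∈ R
    · simpa using congrFun hg ⟨i, hi⟩
    · simp [Finset.sum_apply, hR _ i hi]
  simpa using hrestrict.fintype_card_le_finrank

theorem colsIndep_of_det_submatrix_ne_zero (M : Matrix (Fin k) (Fin n) F)
    {U : Finset (Fin n)} (f : U → Fin k) (h : (M.submatrix f Subtype.val).det ≠ 0) :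
    ColsIndep M U :=
  LinearIndependent.of_comp (LinearMap.funLeft F F f) (linearIndependent_cols_of_det_ne_zero h)

end ColsIndep

section Generic

variable {k n : ℕ}

noncomputable def polyMV (k n : ℕ) (V : Fin k → Finset (Fin n)) :
    Matrix (Fin k) (Fin n) (PR k n) :=
  of fun i j => if j ∈ V i then X (i, j) else 0

theorem MV_eq_map (V : Fin k → Finset (Fin n)) :
    MV k n V = (polyMV k n V).map (algebraMap (PR k n) (FF k n)) := by
  ext i j
  by_cases hj : j ∈ V i <;> simp [MV, polyMV, hj]

theorem det_polyMV_submatrix_ne_zero (V : Fin k → Finset (Fin n)) {U : Finset (Fin n)}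
    {f : U → Fin k} (hf : Function.Injective f) (hfV : ∀ u, (u : Fin n) ∈ V (f u)) :
    ((polyMV k n V).submatrix f Subtype.val).det ≠ 0 := by
  let pt : Fin k × Fin n → ℝ := fun p =>
    if h : p.2 ∈ U then if f ⟨p.2, h⟩ = p.1 then 1 else 0 else 0
  have hspec : ((polyMV k n V).submatrix f Subtype.val).map (eval pt) = (1 : Matrix U U ℝ) := by
    ext u v
    by_cases huv : u = v
    · subst huv
      simp [polyMV, pt, hfV u]
    · by_cases hv : (v : Fin n) ∈ V (f u) <;>
        simp [polyMV, pt, hv, one_apply_ne huv, hf.ne (Ne.symm huv)]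
  intro h0
  have := congrArg (eval pt) h0
  rw [RingHom.map_det, RingHom.mapMatrix_apply, hspec, det_one, map_zero] at this
  exact one_ne_zero this

theorem card_le_card_rowsMeeting_of_colsIndep {V : Fin k → Finset (Fin n)}
    {U : Finset (Fin n)} (h : ColsIndep (MV k n V) U) : U.card ≤ (rowsMeeting V U).card := by
  refine (Fintype.card_coe U).symm.le.trans
    (h.card_le_card_of_forall_notMem_eq_zero _ fun j i hi => ?_)
  have hj : (j : Fin n) ∉ V i := fun hj =>
    hi (mem_filter.2 ⟨mem_univ _, j, mem_inter.2 ⟨hj, j.2⟩⟩)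
  simp [MV, hj]

theorem colsIndep_MV_iff (V : Fin k → Finset (Fin n)) (U : Finset (Fin n)) :
    ColsIndep (MV k n V) U ↔ ∀ U' ⊆ U, U'.card ≤ (rowsMeeting V U').card := by
  refine ⟨fun h U' hU' => card_le_card_rowsMeeting_of_colsIndep (h.mono hU'), fun hall => ?_⟩
  obtain ⟨f, hf, hfV⟩ := exists_injective_of_hall V U hall
  refine colsIndep_of_det_submatrix_ne_zero _ f ?_
  rw [MV_eq_map, submatrix_map, ← RingHom.mapMatrix_apply, ← RingHom.map_det]
  exact (map_ne_zero_iff _ (IsFractionRing.injective (PR k n) (FF k n))).2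
    (det_polyMV_submatrix_ne_zero V hf hfV)

end Generic

/-- a nonempty `S ⊆ {1,…,n}` is a circuit of the column matroid of `M_V`
(the columns indexed by `S` are dependent over `K` while those indexed by any proper
subset are independent) iff `|{i : V_i ∩ S ≠ ∅}| = |S| − 1` and every nonempty proper
subset `U ⊊ S` satisfies `|{i : V_i ∩ U ≠ ∅}| ≥ |U|`. -/
theorem statement2 (k n : ℕ) (V : Fin k → Finset (Fin n)) (S : Finset (Fin n))
    (hS : S.Nonempty) :
    (¬ ColsIndep (MV k n V) S ∧
        ∀ U : Finset (Fin n), U ⊂ S → ColsIndep (MV k n V) U) ↔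
      ((Finset.univ.filter fun i : Fin k => (V i ∩ S).Nonempty).card = S.card - 1 ∧
        ∀ U : Finset (Fin n), U ⊂ S → U.Nonempty →
          U.card ≤ (Finset.univ.filter fun i : Fin k => (V i ∩ U).Nonempty).card) := by
  simp_rw [colsIndep_MV_iff]
  exact not_hall_and_forall_ssubset_hall_iff (fun _ _ h => card_le_card (rowsMeeting_mono V h)) hS
end

section
/- Let V_1, …, V_k be subsets of {1,…,n} and M_V the associated variable-valued matrix over K. The k rows of M_V are linearly independent over K (equivalently, M_V has rank k) if and only if every nonempty subset T ⊆ {1,…,k} satisfies |∪_{i∈T} V_i| ≥ |T|. -/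
/-!
Necessity is a dimension count: the rows indexed by `T` vanish outside `⋃_{i∈T} V_i`, so `|T|`
independent vectors live in a space of dimension `|⋃_{i∈T} V_i|`. For sufficiency, Hall's theorem
gives an injective `f` with `f i ∈ V_i`. Specializing `x_{i,j}` to `1` when `j = f i` and to `0`
otherwise sends the `k × k` minor of `M_V` on the columns `f` to the identity matrix, so that minor
is a nonzero polynomial, hence nonzero in `K`.
-/

open MvPolynomial

open Function

theorem LinearIndependent.card_le_card_of_forall_notMem_eq_zero_s3 {K ι σ : Type*} [Field K]
    [Fintype ι] {v : ι → σ → K} (hv : LinearIndependent K v) {U : Finset σ}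
    (hU : ∀ i, ∀ j ∉ U, v i j = 0) : Fintype.card ι ≤ U.card := by
  have hext : ExtendByZero.linearMap K ((↑) : U → σ) ∘ (fun i (j : U) => v i j) = v := by
    funext i j
    simp only [comp_apply, ExtendByZero.linearMap_apply]
    by_cases hj : j ∈ U
    · exact Subtype.val_injective.extend_apply (fun j : U => v i j) 0 (⟨j, hj⟩ : U)
    · rw [hU i j hj]
      exact extend_apply' _ _ j <| by rintro ⟨a, rfl⟩; exact hj a.2
  have hrestrict := (hext ▸ hv).of_comp.fintype_card_le_finrank
  rwa [Module.finrank_fintype_fun_eq_card, Fintype.card_coe] at hrestrict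

theorem Matrix.det_ne_zero_of_map_eq_one {ι R S : Type*} [Fintype ι] [DecidableEq ι]
    [CommRing R] [CommRing S] [Nontrivial S] {P : Matrix ι ι R} (φ : R →+* S)
    (h : P.map φ = 1) : P.det ≠ 0 := fun h0 => by
  simpa [h0, h] using φ.map_det P

theorem Matrix.linearIndependent_rows_of_det_submatrix_ne_zero {m n K : Type*} [Fintype m]
    [DecidableEq m] [Field K] (M : Matrix m n K) (f : m → n) (h : (M.submatrix id f).det ≠ 0) :
    LinearIndependent K fun i => M i :=
  (linearIndependent_rows_iff_isUnit.2 ((isUnit_iff_isUnit_det _).2 h.isUnit)).of_comp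
    (LinearMap.funLeft K K f)

noncomputable def varMatrix (R : Type*) [CommSemiring R] {k n : ℕ} (V : Fin k → Finset (Fin n)) :
    Matrix (Fin k) (Fin n) (MvPolynomial (Fin k × Fin n) R) :=
  Matrix.of fun i j => if j ∈ V i then X (i, j) else 0

theorem MV_eq_map_varMatrix {k n : ℕ} (V : Fin k → Finset (Fin n)) :
    MV k n V = (varMatrix ℝ V).map (algebraMap (PR k n) (FF k n)) := by
  ext i j
  simp only [MV, varMatrix, Matrix.map_apply, Matrix.of_apply]
  split_ifs <;> simp

theorem varMatrix_submatrix_map_eval_eq_one (R : Type*) [CommSemiring R] {k n : ℕ}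
    {V : Fin k → Finset (Fin n)} {f : Fin k → Fin n} (hf : Injective f) (hfV : ∀ i, f i ∈ V i) :
    ((varMatrix R V).submatrix id f).map (eval fun p => if p.2 = f p.1 then 1 else 0) = 1 := by
  ext i i'
  by_cases h : i = i'
  · subst h
    simp [varMatrix, hfV]
  · simp only [varMatrix, Matrix.map_apply, Matrix.submatrix_apply, Matrix.of_apply, id_eq,
      Matrix.one_apply_ne h]
    split_ifs <;> simp [hf.eq_iff, Ne.symm h]

theorem det_MV_submatrix_ne_zero {k n : ℕ} {V : Fin k → Finset (Fin n)} {f : Fin k → Fin n}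
    (hf : Injective f) (hfV : ∀ i, f i ∈ V i) : ((MV k n V).submatrix id f).det ≠ 0 := by
  rw [MV_eq_map_varMatrix, Matrix.submatrix_map, ← RingHom.mapMatrix_apply, ← RingHom.map_det]
  exact (map_ne_zero_iff _ (IsFractionRing.injective _ _)).2
    (Matrix.det_ne_zero_of_map_eq_one _ (varMatrix_submatrix_map_eval_eq_one ℝ hf hfV))

/-- the `k` rows of `M_V` are linearly independent over `K`
(equivalently, `M_V` has rank `k`) iff every nonempty `T ⊆ {1,…,k}` satisfies
`|∪_{i∈T} V_i| ≥ |T|`. -/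
theorem statement3 (k n : ℕ) (V : Fin k → Finset (Fin n)) :
    LinearIndependent (FF k n) (fun i : Fin k => fun j : Fin n => MV k n V i j) ↔
      ∀ T : Finset (Fin k), T.Nonempty → T.card ≤ (T.biUnion V).card := by
  constructor
  · intro h T _
    have hsupp : ∀ i : T, ∀ j ∉ T.biUnion V, MV k n V i j = 0 := fun i j hj =>
      if_neg fun hji => hj (Finset.subset_biUnion_of_mem V i.2 hji)
    simpa using (h.comp _ Subtype.val_injective).card_le_card_of_forall_notMem_eq_zero_s3 hsupp
  · intro hall
    obtain ⟨f, hf, hfV⟩ := (Finset.all_card_le_biUnion_card_iff_exists_injective V).1 fun T =>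
      T.eq_empty_or_nonempty.elim (fun hT => by simp [hT]) (hall T)
    exact (MV k n V).linearIndependent_rows_of_det_submatrix_ne_zero f
      (det_MV_submatrix_ne_zero hf hfV)
end

section
/- Let W = (𝒫,[n]) be an admissible Wilson loop diagram and p = (i, i+2) ∈ 𝒫. If p is the only propagator of 𝒫 incident to the edge i+2, then (i+1, i+3) ∉ 𝒫 and the Wilson loop diagram ((𝒫 ∖ {p}) ∪ {(i+1, i+3)}, [n]) is admissible. Symmetrically, if p is the only propagator of 𝒫 incident to the edge i, then (i−1, i+1) ∉ 𝒫 and the Wilson loop diagram ((𝒫 ∖ {p}) ∪ {(i−1, i+1)}, [n]) is admissible. -/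
/-- `b` lies strictly inside the cyclic interval going (in the increasing cyclic direction)
from `a` to `c` in `ZMod n`. -/
def Inside {n : ℕ} (a b c : ZMod n) : Prop :=
  0 < (b - a).val ∧ (b - a).val < (c - a).val

/-- Two propagators (given as ordered pairs representing unordered pairs) cross:
exactly one endpoint of `q` lies strictly inside each of the two cyclic intervals into
which the endpoints of `p` divide `ZMod n`. -/
def Cross {n : ℕ} (p q : ZMod n × ZMod n) : Prop :=
  (Inside p.1 q.1 p.2 ∧ Inside p.2 q.2 p.1) ∨
    (Inside p.1 q.2 p.2 ∧ Inside p.2 q.1 p.1)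

/-- The support `V_p = {i, i+1, j, j+1}` of a propagator `p = (i,j)`. -/
def propSupp {n : ℕ} (p : ZMod n × ZMod n) : Finset (ZMod n) :=
  {p.1, p.1 + 1, p.2, p.2 + 1}

/-- The support `V_P` of a multiset of propagators. -/
def multiSupp {n : ℕ} (P : Multiset (ZMod n × ZMod n)) : Finset (ZMod n) :=
  (P.map propSupp).sup

/-- A Wilson loop diagram `(Ps, [n])` is admissible: no two propagators cross,
every nonempty subset `P` of the propagators satisfies `|V_P| ≥ |P| + 3`
(local density), and `n ≥ |Ps| + 4` (global density). -/
def Admissible (n : ℕ) (Ps : Multiset (ZMod n × ZMod n)) : Prop :=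
  (∀ p ∈ Ps, ∀ q ∈ Ps, ¬ Cross p q) ∧
  (∀ P : Multiset (ZMod n × ZMod n), P ≤ Ps → P ≠ 0 →
    Multiset.card P + 3 ≤ (multiSupp P).card) ∧
  Multiset.card Ps + 4 ≤ n

/-!
The propagator `(i, i + 2)` spans the single vertex `i + 1`. No other propagator ends at
`i + 1`: it would either have fewer than four support vertices or cross `(i, i + 2)`; and no
second copy of `(i, i + 2)` or `(i + 2, i)` occurs, since together they only support four
vertices. If `(i, i + 2)` is the only propagator at the edge `i + 2` (resp. `i`), the remaining
propagators therefore avoid the endpoints `i + 1, i + 2` (resp. `i, i + 1`). The shifted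
propagator `(i + 1, i + 3)` (resp. `(i - 1, i + 1)`) then crosses nothing, as only an endpoint at
its middle vertex could cross it, and its support vertex `i + 2` (resp. `i + 1`) lies in the
support of no other propagator, so every subdiagram containing it keeps `|V_P| ≥ |P| + 3`.
-/

section WilsonLoop

variable {n : ℕ} {Ps : Multiset (ZMod n × ZMod n)}

theorem Inside.rotate [NeZero n] {a b c : ZMod n} (h : Inside a b c) : Inside b c a := by
  obtain ⟨hb, hbc⟩ := h
  have hcb : (c - b).val = (c - a).val - (b - a).val := by
    rw [show c - b = (c - a) - (b - a) by ring, ZMod.val_sub hbc.le]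
  have hab : (a - b).val = n - (b - a).val := by
    rw [show a - b = -(b - a) by ring, ZMod.neg_val, if_neg (ZMod.val_pos.mp hb)]
  have := ZMod.val_lt (c - a)
  constructor <;> omega

theorem Inside.shrink [NeZero n] {a b c d : ZMod n} (hb : Inside a b c) (hc : Inside a c d) :
    Inside b c d := by
  obtain ⟨hb0, hbc⟩ := hb
  obtain ⟨-, hcd⟩ := hc
  have hcb : (c - b).val = (c - a).val - (b - a).val := by
    rw [show c - b = (c - a) - (b - a) by ring, ZMod.val_sub hbc.le]
  have hdb : (d - b).val = (d - a).val - (b - a).val := by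
    rw [show d - b = (d - a) - (b - a) by ring, ZMod.val_sub (hbc.trans hcd).le]
  constructor <;> omega

theorem eq_add_one_of_inside [NeZero n] {a b : ZMod n} (h : Inside a b (a + 2)) : b = a + 1 := by
  obtain ⟨hb, hb2⟩ := h
  rw [add_sub_cancel_left, ZMod.val_two_eq_two_mod] at hb2
  have hval : (b - a).val = 1 := by have := Nat.mod_le 2 n; omega
  rw [← sub_eq_iff_eq_add', ← ZMod.natCast_zmod_val (b - a), hval, Nat.cast_one]

theorem inside_add_one (hn : 3 ≤ n) (a : ZMod n) : Inside a (a + 1) (a + 2) := by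
  simp only [Inside, add_sub_cancel_left, ZMod.val_one_eq_one_mod, ZMod.val_two_eq_two_mod,
    Nat.mod_eq_of_lt (show 1 < n by omega), Nat.mod_eq_of_lt (show 2 < n by omega)]
  omega

theorem inside_of_ne {a x : ZMod n} (hn : 3 ≤ n) (h0 : x ≠ a) (h1 : x ≠ a + 1)
    (h2 : x ≠ a + 2) : Inside (a + 2) x a := by
  have : NeZero n := ⟨by omega⟩
  have hneg : (a - (a + 2)).val = n - 2 := by
    have h2n : (2 : ZMod n).val = 2 := by rw [ZMod.val_two_eq_two_mod, Nat.mod_eq_of_lt hn]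
    rw [show a - (a + 2) = -2 by ring, ZMod.neg_val, h2n, if_neg]
    intro h
    rw [h, ZMod.val_zero] at h2n
    omega
  unfold Inside
  set y := x - (a + 2)
  have wrap : ∀ m : ℕ, y.val + m = n → y + m = 0 := fun m h => by
    rw [← ZMod.natCast_zmod_val y, ← Nat.cast_add, h, ZMod.natCast_self]
  have hlt := ZMod.val_lt y
  refine ⟨ZMod.val_pos.mpr (sub_ne_zero.mpr h2), ?_⟩
  rw [hneg]
  by_contra hge
  obtain h | h : y.val + 1 = n ∨ y.val + 2 = n := by omega
  · exact h1 (by linear_combination wrap 1 h)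
  · exact h0 (by linear_combination wrap 2 h)

theorem cross_irrefl (p : ZMod n × ZMod n) : ¬ Cross p p := by
  rintro (⟨⟨h, -⟩, -⟩ | ⟨⟨-, h⟩, -⟩)
  · simp at h
  · exact lt_irrefl _ h

theorem Cross.symm [NeZero n] {p q : ZMod n × ZMod n} (h : Cross p q) : Cross q p := by
  rcases h with ⟨h1, h2⟩ | ⟨h1, h2⟩
  · exact Or.inr ⟨h1.shrink h2.rotate.rotate, h2.shrink h1.rotate.rotate⟩
  · exact Or.inl ⟨h2.shrink h1.rotate.rotate, h1.shrink h2.rotate.rotate⟩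

theorem cross_swap_iff {p q : ZMod n × ZMod n} : Cross p q.swap ↔ Cross p q := Or.comm

theorem not_cross_of_ne_add_one [NeZero n] {a : ZMod n} {q : ZMod n × ZMod n}
    (h1 : q.1 ≠ a + 1) (h2 : q.2 ≠ a + 1) : ¬ Cross (a, a + 2) q := by
  rintro (⟨h, -⟩ | ⟨h, -⟩)
  · exact h1 (eq_add_one_of_inside h)
  · exact h2 (eq_add_one_of_inside h)

theorem mem_propSupp {x : ZMod n} {p : ZMod n × ZMod n} :
    x ∈ propSupp p ↔ x = p.1 ∨ x = p.1 + 1 ∨ x = p.2 ∨ x = p.2 + 1 := by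
  simp [propSupp]

theorem propSupp_swap (p : ZMod n × ZMod n) : propSupp p.swap = propSupp p := by
  ext x
  simp only [mem_propSupp, Prod.fst_swap, Prod.snd_swap]
  tauto

theorem add_one_notMem_propSupp {y : ZMod n} {q : ZMod n × ZMod n}
    (hy : q.1 ≠ y ∧ q.2 ≠ y) (hy1 : q.1 ≠ y + 1 ∧ q.2 ≠ y + 1) : y + 1 ∉ propSupp q := by
  rw [mem_propSupp]
  rintro (h | h | h | h)
  exacts [hy1.1 h.symm, hy.1 (add_right_cancel h).symm, hy1.2 h.symm,
    hy.2 (add_right_cancel h).symm]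

theorem card_propSupp_le_three {p : ZMod n × ZMod n}
    (h : p.2 + 1 = p.1 ∨ p.2 = p.1 ∨ p.2 = p.1 + 1) : (propSupp p).card ≤ 3 := by
  obtain ⟨a, b⟩ := p
  rcases h with h | h | h <;> dsimp only at h <;> subst h
  · exact (Finset.card_le_card (by intro x; simp [mem_propSupp]; tauto)).trans
      (Finset.card_le_three (a := b) (b := b + 1) (c := b + 1 + 1))
  · exact (Finset.card_le_card (by intro x; simp [mem_propSupp]; tauto)).trans
      (Finset.card_le_three (a := b) (b := b + 1) (c := b + 1))
  · exact (Finset.card_le_card (by intro x; simp [mem_propSupp])).trans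
      (Finset.card_le_three (a := a) (b := a + 1) (c := a + 1 + 1))

theorem card_propSupp_add_two (hn : 4 ≤ n) (a : ZMod n) : (propSupp (a, a + 2)).card = 4 := by
  have himage : propSupp (a, a + 2) = (Finset.range 4).image (fun k : ℕ => a + k) := by
    ext x
    simp only [propSupp, Finset.range_add_one, Finset.image_insert, Finset.mem_insert,
      Finset.range_zero, Finset.image_empty, Finset.mem_singleton]
    push_cast
    rw [add_assoc, add_zero]
    norm_num
    tauto
  rw [himage, Finset.card_image_of_injOn, Finset.card_range]
  intro k hk l hl h
  have := congrArg ZMod.val (add_left_cancel h)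
  simp only [Finset.coe_range, Set.mem_Iio] at hk hl
  rwa [ZMod.val_cast_of_lt (by omega), ZMod.val_cast_of_lt (by omega)] at this

theorem fst_ne_add_one_of_not_cross (hn : 3 ≤ n) {a : ZMod n} {q : ZMod n × ZMod n}
    (hq : 4 ≤ (propSupp q).card) (hc : ¬ Cross (a, a + 2) q) : q.1 ≠ a + 1 := by
  intro h1
  by_cases hnear : q.2 = a ∨ q.2 = a + 1 ∨ q.2 = a + 2
  · refine absurd (card_propSupp_le_three (p := q) ?_) (by omega)
    rw [h1]
    rcases hnear with h | h | h <;> rw [h]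
    exacts [Or.inl rfl, Or.inr (Or.inl rfl), Or.inr (Or.inr (by ring))]
  · simp only [not_or] at hnear
    exact hc (Or.inl ⟨h1 ▸ inside_add_one hn a, inside_of_ne hn hnear.1 hnear.2.1 hnear.2.2⟩)

theorem multiSupp_cons (p : ZMod n × ZMod n) (P : Multiset (ZMod n × ZMod n)) :
    multiSupp (p ::ₘ P) = propSupp p ∪ multiSupp P := by
  simp [multiSupp, Finset.sup_eq_union]

theorem multiSupp_singleton (p : ZMod n × ZMod n) : multiSupp {p} = propSupp p := by
  simp [multiSupp]

theorem multiSupp_mono {P Q : Multiset (ZMod n × ZMod n)} (h : P ≤ Q) :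
    multiSupp P ⊆ multiSupp Q :=
  Multiset.sup_mono (Multiset.map_subset_map (Multiset.subset_of_le h))

theorem mem_multiSupp {x : ZMod n} {P : Multiset (ZMod n × ZMod n)} :
    x ∈ multiSupp P ↔ ∃ q ∈ P, x ∈ propSupp q := by
  induction P using Multiset.induction with
  | empty => simp [multiSupp]
  | cons p P ih => simp [multiSupp_cons, ih]

theorem Admissible.mono {Q : Multiset (ZMod n × ZMod n)} (hW : Admissible n Ps) (hQ : Q ≤ Ps) :
    Admissible n Q :=
  ⟨fun p hp q hq => hW.1 p (Multiset.mem_of_le hQ hp) q (Multiset.mem_of_le hQ hq),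
    fun P hP => hW.2.1 P (hP.trans hQ),
    (Nat.add_le_add_right (Multiset.card_le_card hQ) 4).trans hW.2.2⟩

theorem Admissible.card_erase_add_five_le (hW : Admissible n Ps) {p : ZMod n × ZMod n}
    (hp : p ∈ Ps) : Multiset.card (Ps.erase p) + 5 ≤ n := by
  have := Multiset.card_erase_add_one hp
  have := hW.2.2
  omega

theorem Admissible.four_le_card_propSupp (hW : Admissible n Ps) {q : ZMod n × ZMod n}
    (hq : q ∈ Ps) : 4 ≤ (propSupp q).card := by
  simpa [multiSupp_singleton] using hW.2.1 {q} (Multiset.singleton_le.mpr hq) (by simp)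

theorem Admissible.five_le_card_propSupp_union (hW : Admissible n Ps) {p q : ZMod n × ZMod n}
    (h : p ::ₘ {q} ≤ Ps) : 5 ≤ (propSupp p ∪ propSupp q).card := by
  simpa [multiSupp_cons, multiSupp_singleton] using hW.2.1 _ h (by simp)

theorem Admissible.ne_add_one (hW : Admissible n Ps) {a : ZMod n} (hp : (a, a + 2) ∈ Ps)
    {q : ZMod n × ZMod n} (hq : q ∈ Ps) : q.1 ≠ a + 1 ∧ q.2 ≠ a + 1 := by
  have hn : 3 ≤ n := by have := hW.card_erase_add_five_le hp; omega
  have h4 := hW.four_le_card_propSupp hq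
  have hnc := hW.1 _ hp q hq
  exact ⟨fst_ne_add_one_of_not_cross hn h4 hnc,
    fst_ne_add_one_of_not_cross (q := q.swap) hn (by rwa [propSupp_swap])
      (by rwa [cross_swap_iff])⟩

theorem Admissible.ne_of_mem_erase (hW : Admissible n Ps) {a : ZMod n} (hp : (a, a + 2) ∈ Ps)
    {q : ZMod n × ZMod n} (hq : q ∈ Ps.erase (a, a + 2)) : q ≠ (a, a + 2) ∧ q ≠ (a + 2, a) := by
  have h5 := hW.five_le_card_propSupp_union
    (Multiset.cons_erase hp ▸ Multiset.cons_le_cons _ (Multiset.singleton_le.mpr hq))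
  have h4 : (propSupp (a, a + 2)).card ≤ 4 := Finset.card_le_four
  constructor <;> rintro rfl
  · rw [Finset.union_self] at h5
    omega
  · rw [show ((a + 2, a) : ZMod n × ZMod n) = (a, a + 2).swap from rfl, propSupp_swap,
      Finset.union_self] at h5
    omega

theorem Admissible.cons_add_two {Q : Multiset (ZMod n × ZMod n)} (hQ : Admissible n Q)
    (hcard : Multiset.card Q + 5 ≤ n) {a v : ZMod n} (hv : v ∈ propSupp (a, a + 2))
    (hmid : ∀ q ∈ Q, q.1 ≠ a + 1 ∧ q.2 ≠ a + 1) (hfree : ∀ q ∈ Q, v ∉ propSupp q) :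
    Admissible n ((a, a + 2) ::ₘ Q) := by
  have : NeZero n := ⟨by omega⟩
  have hnc : ∀ q ∈ Q, ¬ Cross (a, a + 2) q := fun q hq =>
    not_cross_of_ne_add_one (hmid q hq).1 (hmid q hq).2
  refine ⟨?_, ?_, by rw [Multiset.card_cons]; omega⟩
  · intro p hp q hq
    rcases Multiset.mem_cons.mp hp with rfl | hp <;> rcases Multiset.mem_cons.mp hq with rfl | hq
    exacts [cross_irrefl _, hnc q hq, fun h => hnc p hp h.symm, hQ.1 p hp q hq]
  · intro P hP hP0
    by_cases hr : (a, a + 2) ∈ P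
    · obtain ⟨P', rfl⟩ := Multiset.exists_cons_of_mem hr
      have hP' : P' ≤ Q := (Multiset.cons_le_cons_iff _).mp hP
      have h4 := card_propSupp_add_two (by omega) a
      rw [multiSupp_cons, Multiset.card_cons]
      rcases eq_or_ne P' 0 with rfl | hP'0
      · simp [multiSupp, h4]
      have hvP' : v ∉ multiSupp P' := fun h => by
        obtain ⟨q, hq, hvq⟩ := mem_multiSupp.mp h
        exact hfree q (Multiset.mem_of_le hP' hq) hvq
      calc Multiset.card P' + 1 + 3 ≤ (insert v (multiSupp P')).card := by
            rw [Finset.card_insert_of_notMem hvP']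
            have := hQ.2.1 P' hP' hP'0
            omega
        _ ≤ _ := Finset.card_le_card
            (Finset.insert_subset (Finset.mem_union_left _ hv) Finset.subset_union_right)
    · exact hQ.2.1 P ((Multiset.le_cons_of_notMem hr).mp hP) hP0

end WilsonLoop

/-- let `(Ps,[n])` be an admissible Wilson loop diagram and
`p = (i,i+2) ∈ Ps`.  If `p` is the only propagator incident to the edge `i+2`, then
`(i+1,i+3) ∉ Ps` and replacing `p` by `(i+1,i+3)` gives an admissible diagram;
symmetrically, if `p` is the only propagator incident to the edge `i`, then
`(i−1,i+1) ∉ Ps` and replacing `p` by `(i−1,i+1)` gives an admissible diagram. -/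
theorem statement14 (n : ℕ) (Ps : Multiset (ZMod n × ZMod n))
    (hW : Admissible n Ps) (i : ZMod n) (hp : (i, i + 2) ∈ Ps) :
    ((∀ q ∈ Ps, (q.1 = i + 2 ∨ q.2 = i + 2) → q = (i, i + 2) ∨ q = (i + 2, i)) →
      ((i + 1, i + 3) ∉ Ps ∧ (i + 3, i + 1) ∉ Ps) ∧
      Admissible n ((i + 1, i + 3) ::ₘ Ps.erase (i, i + 2))) ∧
    ((∀ q ∈ Ps, (q.1 = i ∨ q.2 = i) → q = (i, i + 2) ∨ q = (i + 2, i)) →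
      ((i - 1, i + 1) ∉ Ps ∧ (i + 1, i - 1) ∉ Ps) ∧
      Admissible n ((i - 1, i + 1) ::ₘ Ps.erase (i, i + 2))) := by
  have hQ := hW.mono (Multiset.erase_le (i, i + 2) Ps)
  have hcard := hW.card_erase_add_five_le hp
  have hmid : ∀ q ∈ Ps.erase (i, i + 2), q.1 ≠ i + 1 ∧ q.2 ≠ i + 1 := fun q hq =>
    hW.ne_add_one hp (Multiset.mem_of_mem_erase hq)
  have havoid : ∀ x : ZMod n,
      (∀ q ∈ Ps, (q.1 = x ∨ q.2 = x) → q = (i, i + 2) ∨ q = (i + 2, i)) →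
      ∀ q ∈ Ps.erase (i, i + 2), q.1 ≠ x ∧ q.2 ≠ x := by
    intro x hsole q hq
    have hne := hW.ne_of_mem_erase hp hq
    refine not_or.mp fun hx => ?_
    rcases hsole q (Multiset.mem_of_mem_erase hq) hx with h | h
    exacts [hne.1 h, hne.2 h]
  refine ⟨fun hsole => ⟨⟨fun h => (hW.ne_add_one hp h).1 rfl,
    fun h => (hW.ne_add_one hp h).2 rfl⟩, ?_⟩, fun hsole => ⟨⟨fun h => (hW.ne_add_one hp h).2 rfl,
    fun h => (hW.ne_add_one hp h).1 rfl⟩, ?_⟩⟩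
  · have hfar : ∀ q ∈ Ps.erase (i, i + 2), q.1 ≠ i + 1 + 1 ∧ q.2 ≠ i + 1 + 1 := by
      rw [show i + 1 + 1 = i + 2 by ring]
      exact havoid _ hsole
    rw [show i + 3 = i + 1 + 2 by ring]
    exact hQ.cons_add_two hcard (by simp [mem_propSupp]) hfar
      fun q hq => add_one_notMem_propSupp (hmid q hq) (hfar q hq)
  · have hnear := havoid i hsole
    rw [show i + 1 = i - 1 + 2 by ring]
    refine hQ.cons_add_two hcard (v := i + 1) ?_ (by simpa only [sub_add_cancel] using hnear)
      fun q hq => add_one_notMem_propSupp (hnear q hq) (hmid q hq)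
    rw [mem_propSupp]
    exact Or.inr (Or.inr (Or.inl (by ring)))
end
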